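/- Fix integers B ≥ 1, D ≥ 1 and reals C > 0, t > 0, α > 2C. Let Z_0, Z_1, Z_2, … be i.i.d. random variables, each binomially distributed with D trials and success probability 1/B, and define X_0 = 0 and X_{i+1} = max(0, X_i + Z_i − C). If E[exp(t Z_0)] ≤ (1/2) · exp(tC), then for every i ≥ 0, Pr[X_i > α] ≤ exp(t · (2C − α)). -/

import Mathlib

/-!
For `t ≥ 0` one has `exp (t · max 0 s) ≤ 1 + exp (t s)`. Since `X i` is a function of
`Z 0, …, Z (i-1)`, it is independent of `Z i`, so `mᵢ = E[exp (t X i)]` satisfies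
`mᵢ₊₁ ≤ 1 + mᵢ · E[exp (t Z i)] · exp (-t C) ≤ 1 + mᵢ / 2`. As `E[exp (t Z 0)] ≥ 1`, the
hypothesis forces `exp (t C) ≥ 2`, so the bound `mᵢ ≤ exp (2 t C)` is preserved by induction;
the Chernoff inequality then gives the tail bound.
-/

open MeasureTheory ProbabilityTheory Real

lemma exp_mul_max_zero_sub_le {t : ℝ} (ht : 0 ≤ t) (s c : ℝ) :
    exp (t * max 0 (s - c)) ≤ 1 + exp (t * s) / exp (t * c) := by
  rw [mul_max_of_nonneg _ _ ht, mul_zero, ← exp_sub, ← mul_sub]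
  rcases le_total 0 (t * (s - c)) with h | h
  · rw [max_eq_right h]; linarith [exp_pos 0]
  · rw [max_eq_left h, exp_zero]; linarith [exp_pos (t * (s - c))]

lemma one_le_mgf_of_nonneg {Ω : Type*} {mΩ : MeasurableSpace Ω} {μ : Measure Ω}
    [IsProbabilityMeasure μ] {X : Ω → ℝ} {t : ℝ} (hX : 0 ≤ᵐ[μ] X) (ht : 0 ≤ t)
    (hint : Integrable (fun ω => exp (t * X ω)) μ) : 1 ≤ mgf X μ t := by
  simpa [mgf_const] using mgf_mono_of_nonneg (X := fun _ => 0) hX ht hint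

section NatValued

variable {Ω : Type*} {mΩ : MeasurableSpace Ω} {μ : Measure Ω} [IsFiniteMeasure μ]

lemma identDistrib_of_measureReal_eq {Z Z' : Ω → ℕ} (hZ : Measurable Z) (hZ' : Measurable Z')
    (h : ∀ k, μ.real {ω | Z ω = k} = μ.real {ω | Z' ω = k}) : IdentDistrib Z Z' μ μ where
  aemeasurable_fst := hZ.aemeasurable
  aemeasurable_snd := hZ'.aemeasurable
  map_eq := Measure.ext_of_singleton fun k => by
    rw [Measure.map_apply hZ (measurableSet_singleton k),
      Measure.map_apply hZ' (measurableSet_singleton k)]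
    exact (ENNReal.toReal_eq_toReal_iff' (measure_ne_top _ _) (measure_ne_top _ _)).mp (h k)

lemma ae_le_of_measureReal_eq_zero {Z : Ω → ℕ} {D : ℕ}
    (h : ∀ k, D < k → μ.real {ω | Z ω = k} = 0) : ∀ᵐ ω ∂μ, Z ω ≤ D := by
  have hsplit : {ω | ¬Z ω ≤ D} = ⋃ k ∈ Set.Ioi D, {ω | Z ω = k} := by ext; simp
  rw [ae_iff, hsplit, measure_biUnion_null_iff (Set.to_countable _)]
  exact fun k hk => (measureReal_eq_zero_iff).mp (h k hk)

lemma integrable_exp_mul_of_ae_le {Z : Ω → ℕ} {D : ℕ} (hZ : Measurable Z)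
    (hD : ∀ᵐ ω ∂μ, Z ω ≤ D) {t : ℝ} (ht : 0 ≤ t) :
    Integrable (fun ω => exp (t * Z ω)) μ :=
  .of_bound ((measurable_from_nat.comp hZ).const_mul t).exp.aestronglyMeasurable
    (exp (t * D)) <| by
    filter_upwards [hD] with ω hω
    rw [norm_of_nonneg (exp_pos _).le, exp_le_exp]
    gcongr

end NatValued

section ReflectedWalk

variable {Ω : Type*} {mΩ : MeasurableSpace Ω} {μ : Measure Ω} {X Y : ℕ → Ω → ℝ} {C t : ℝ}

structure IsReflectedWalk (C : ℝ) (Y X : ℕ → Ω → ℝ) : Prop where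
  zero : ∀ ω, X 0 ω = 0
  succ : ∀ i ω, X (i + 1) ω = max 0 (X i ω + Y i ω - C)

namespace IsReflectedWalk

lemma measurable_past (hX : IsReflectedWalk C Y X) (i : ℕ) :
    Measurable[⨆ j < i, MeasurableSpace.comap (Y j) Real.measurableSpace] (X i) := by
  induction i with
  | zero =>
    rw [show X 0 = fun _ => 0 from funext hX.zero]
    exact measurable_const
  | succ i ih =>
    rw [show X (i + 1) = fun ω => max 0 (X i ω + Y i ω - C) from funext (hX.succ i)]
    have hpast : (⨆ j < i, MeasurableSpace.comap (Y j) Real.measurableSpace) ≤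
        ⨆ j < i + 1, MeasurableSpace.comap (Y j) Real.measurableSpace :=
      iSup₂_mono' fun j hj => ⟨j, Nat.lt_succ_of_lt hj, le_rfl⟩
    have hYi : Measurable[⨆ j < i + 1, MeasurableSpace.comap (Y j) Real.measurableSpace] (Y i) :=
      (comap_measurable (Y i)).mono (le_iSup₂_of_le i (Nat.lt_succ_self i) le_rfl) le_rfl
    exact measurable_const.max (((ih.mono hpast le_rfl).add hYi).sub measurable_const)

lemma measurable (hX : IsReflectedWalk C Y X) (hY : ∀ i, Measurable (Y i)) (i : ℕ) :
    Measurable (X i) :=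
  (hX.measurable_past i).mono (iSup₂_le fun j _ => (hY j).comap_le) le_rfl

lemma indepFun (hX : IsReflectedWalk C Y X) (hY : ∀ i, Measurable (Y i))
    (hindep : iIndepFun Y μ) (i : ℕ) : IndepFun (X i) (Y i) μ := by
  rw [iIndepFun_iff_iIndep] at hindep
  have h := indep_iSup_of_disjoint (fun j => (hY j).comap_le) hindep
    (Set.disjoint_singleton_right.mpr (lt_irrefl i) : Disjoint (Set.Iio i) {i})
  rw [iSup_singleton] at h
  rw [IndepFun_iff_Indep]
  exact indep_of_indep_of_le_left h (hX.measurable_past i).comap_le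

lemma exp_mul_succ_le (hX : IsReflectedWalk C Y X) (ht : 0 ≤ t) (i : ℕ) (ω : Ω) :
    exp (t * X (i + 1) ω) ≤ 1 + exp (t * (X i + Y i) ω) / exp (t * C) := by
  rw [hX.succ]
  exact exp_mul_max_zero_sub_le ht _ _

lemma integrable_exp_mul [IsFiniteMeasure μ] (hX : IsReflectedWalk C Y X) (ht : 0 ≤ t)
    (hY : ∀ i, Measurable (Y i)) (hindep : iIndepFun Y μ)
    (hint : ∀ i, Integrable (fun ω => exp (t * Y i ω)) μ) (i : ℕ) :
    Integrable (fun ω => exp (t * X i ω)) μ := by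
  induction i with
  | zero => simp [hX.zero]
  | succ i ih =>
    have hsum := (hX.indepFun hY hindep i).integrable_exp_mul_add ih (hint i)
    refine ((integrable_const 1).add (hsum.div_const (exp (t * C)))).mono'
      (((hX.measurable hY (i + 1)).const_mul t).exp.aestronglyMeasurable)
      (ae_of_all _ fun ω => ?_)
    rw [norm_of_nonneg (exp_pos _).le]
    exact hX.exp_mul_succ_le ht i ω

lemma mgf_succ_le [IsProbabilityMeasure μ] (hX : IsReflectedWalk C Y X) (ht : 0 ≤ t)
    (hY : ∀ i, Measurable (Y i)) (hindep : iIndepFun Y μ)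
    (hint : ∀ i, Integrable (fun ω => exp (t * Y i ω)) μ) (i : ℕ) :
    mgf (X (i + 1)) μ t ≤ 1 + mgf (X i) μ t * mgf (Y i) μ t / exp (t * C) := by
  have hint_X := hX.integrable_exp_mul ht hY hindep hint
  have hindep_XY := hX.indepFun hY hindep i
  have hsum := hindep_XY.integrable_exp_mul_add (hint_X i) (hint i)
  rw [← hindep_XY.mgf_add (hint_X i).aestronglyMeasurable (hint i).aestronglyMeasurable]
  calc mgf (X (i + 1)) μ t ≤ ∫ ω, (1 + exp (t * (X i + Y i) ω) / exp (t * C)) ∂μ :=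
        integral_mono (hint_X (i + 1)) ((integrable_const 1).add (hsum.div_const _))
          (hX.exp_mul_succ_le ht i)
    _ = 1 + mgf (X i + Y i) μ t / exp (t * C) := by
        rw [integral_add (integrable_const 1) (hsum.div_const _), integral_div]
        simp [mgf]

lemma mgf_le [IsProbabilityMeasure μ] (hX : IsReflectedWalk C Y X) (ht : 0 ≤ t)
    (hY : ∀ i, Measurable (Y i)) (hindep : iIndepFun Y μ)
    (hint : ∀ i, Integrable (fun ω => exp (t * Y i ω)) μ) (h2 : 2 ≤ exp (t * C))
    (hmgf : ∀ i, mgf (Y i) μ t ≤ 1 / 2 * exp (t * C)) (i : ℕ) :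
    mgf (X i) μ t ≤ exp (t * C) ^ 2 := by
  induction i with
  | zero =>
    rw [show X 0 = fun _ => 0 from funext hX.zero, mgf_const, mul_zero, exp_zero]
    nlinarith
  | succ i ih =>
    have hE := exp_pos (t * C)
    have hprod : mgf (X i) μ t * mgf (Y i) μ t ≤ exp (t * C) ^ 2 * (1 / 2 * exp (t * C)) :=
      mul_le_mul ih (hmgf i) mgf_nonneg (by positivity)
    calc mgf (X (i + 1)) μ t ≤ 1 + mgf (X i) μ t * mgf (Y i) μ t / exp (t * C) :=
          hX.mgf_succ_le ht hY hindep hint i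
      _ ≤ 1 + exp (t * C) ^ 2 / 2 := by
          rw [add_le_add_iff_left, div_le_iff₀ hE]; linarith
      _ ≤ exp (t * C) ^ 2 := by nlinarith

lemma measureReal_ge_le [IsProbabilityMeasure μ] (hX : IsReflectedWalk C Y X) (ht : 0 ≤ t)
    (hY : ∀ i, Measurable (Y i)) (hindep : iIndepFun Y μ)
    (hint : ∀ i, Integrable (fun ω => exp (t * Y i ω)) μ) (h2 : 2 ≤ exp (t * C))
    (hmgf : ∀ i, mgf (Y i) μ t ≤ 1 / 2 * exp (t * C)) (α : ℝ) (i : ℕ) :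
    μ.real {ω | α ≤ X i ω} ≤ exp (t * (2 * C - α)) :=
  calc μ.real {ω | α ≤ X i ω} ≤ exp (-t * α) * mgf (X i) μ t :=
        measure_ge_le_exp_mul_mgf α ht (hX.integrable_exp_mul ht hY hindep hint i)
    _ ≤ exp (-t * α) * exp (t * C) ^ 2 := by
        gcongr; exact hX.mgf_le ht hY hindep hint h2 hmgf i
    _ = exp (t * (2 * C - α)) := by
        rw [sq, ← exp_add, ← exp_add]; ring_nf

end IsReflectedWalk

end ReflectedWalk

theorem reflected_walk_tail_bound_general {Ω : Type*} [MeasureSpace Ω]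
    [IsProbabilityMeasure (ℙ : Measure Ω)]
    (B D : ℕ) (C t α : ℝ) (ht : 0 < t)
    (Z : ℕ → Ω → ℕ) (hZm : ∀ i, Measurable (Z i))
    (hindep : iIndepFun Z ℙ)
    (hbin : ∀ i, ∀ k : ℕ, (ℙ {ω : Ω | Z i ω = k}).toReal =
      (D.choose k : ℝ) * (1 / B) ^ k * (1 - 1 / B) ^ (D - k))
    (X : ℕ → Ω → ℝ)
    (hX0 : ∀ ω, X 0 ω = 0)
    (hXrec : ∀ i ω, X (i + 1) ω = max 0 (X i ω + Z i ω - C))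
    (hmgf : (∫ ω, Real.exp (t * Z 0 ω) ∂ℙ) ≤ (1 / 2) * Real.exp (t * C)) :
    ∀ i, (ℙ {ω : Ω | X i ω > α}).toReal ≤ Real.exp (t * (2 * C - α)) := by
  set Y : ℕ → Ω → ℝ := fun i ω => Z i ω
  have hY : ∀ i, Measurable (Y i) := fun i => measurable_from_nat.comp (hZm i)
  have hint : ∀ i, Integrable (fun ω => exp (t * Y i ω)) ℙ := fun i =>
    integrable_exp_mul_of_ae_le (hZm i) (ae_le_of_measureReal_eq_zero fun k hk => by
      rw [measureReal_def, hbin i k, Nat.choose_eq_zero_of_lt hk]; simp) ht.le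
  have hidY : ∀ i, IdentDistrib (Y i) (Y 0) ℙ ℙ := fun i =>
    (identDistrib_of_measureReal_eq (hZm i) (hZm 0) fun k => by
      simp only [measureReal_def, hbin]).comp measurable_from_nat
  have hmgfY : ∀ i, mgf (Y i) ℙ t ≤ 1 / 2 * exp (t * C) := fun i =>
    (congrFun (mgf_congr_identDistrib (hidY i)) t).le.trans hmgf
  have h2 : 2 ≤ exp (t * C) := by
    linarith [hmgfY 0, one_le_mgf_of_nonneg (ae_of_all _ fun ω => Nat.cast_nonneg (Z 0 ω))
      ht.le (hint 0)]
  intro i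
  exact (measureReal_mono fun ω (hω : α < X i ω) => hω.le).trans
    (IsReflectedWalk.measureReal_ge_le ⟨hX0, hXrec⟩ ht.le hY
      (hindep.comp _ fun _ => measurable_from_nat) hint h2 hmgfY α i)

/-- Fix integers `B ≥ 1`, `D ≥ 1` and reals `C > 0`, `t > 0`, `α > 2C`. Let
`Z 0, Z 1, …` be i.i.d. `Bin(1/B, D)` random variables and let `X` be the reflected
random walk `X 0 = 0`, `X (i+1) = max(0, X i + Z i − C)`. If
`E[exp(t · Z 0)] ≤ (1/2)·exp(tC)`, then `Pr[X i > α] ≤ exp(t·(2C − α))` for all `i`. -/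
theorem reflected_walk_tail_bound {Ω : Type*} [MeasureSpace Ω]
    [IsProbabilityMeasure (ℙ : Measure Ω)]
    (B D : ℕ) (hB : 1 ≤ B) (hD : 1 ≤ D) (C t α : ℝ) (hC : 0 < C) (ht : 0 < t)
    (hα : 2 * C < α)
    (Z : ℕ → Ω → ℕ) (hZm : ∀ i, Measurable (Z i))
    (hindep : iIndepFun Z ℙ)
    (hbin : ∀ i, ∀ k : ℕ, (ℙ {ω : Ω | Z i ω = k}).toReal =
      (D.choose k : ℝ) * (1 / B) ^ k * (1 - 1 / B) ^ (D - k))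
    (X : ℕ → Ω → ℝ) (hXm : ∀ i, Measurable (X i))
    (hX0 : ∀ ω, X 0 ω = 0)
    (hXrec : ∀ i ω, X (i + 1) ω = max 0 (X i ω + Z i ω - C))
    (hmgf : (∫ ω, Real.exp (t * Z 0 ω) ∂ℙ) ≤ (1 / 2) * Real.exp (t * C)) :
    ∀ i, (ℙ {ω : Ω | X i ω > α}).toReal ≤ Real.exp (t * (2 * C - α)) :=
  reflected_walk_tail_bound_general B D C t α ht Z hZm hindep hbin X hX0 hXrec hmgf
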